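/- Refined union bound of Khabbazi Oskouei–Mancini–Wilde: with the sequential measurement setup and any p, p' > 0 with 1/p + 1/p' = 1, one has Fail − ε₁ ≤ p'·ε₁ + (p+p')·Σ_{1<t<m} ε_t + p·ε_m. -/

import Mathlib

open Matrix ComplexOrder

/-- The Schatten 1-norm (trace norm): ‖M‖₁ = tr √(MᴴM). -/
noncomputable def traceNorm {n m : Type*} [Fintype n] [Fintype m] [DecidableEq m]
    (M : Matrix n m ℂ) : ℝ :=
  (((Matrix.posSemidef_conjTranspose_mul_self M).1.eigenvectorUnitary.1 *
      diagonal (((↑) : ℝ → ℂ) ∘ (√·) ∘ (Matrix.posSemidef_conjTranspose_mul_self M).1.eigenvalues) *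
      (star (Matrix.posSemidef_conjTranspose_mul_self M).1.eigenvectorUnitary :
        Matrix m m ℂ)).trace).re

/-!
Write `ρ = R Rᴴ` and regard `R` as a unit vector `ψ` of Hilbert–Schmidt space, on which left
multiplication by `Aₜ` is an orthogonal projection `Pₜ`; then `Fail = ‖ψ‖² - ‖P_{m-1} ⋯ P₀ ψ‖²` and
`εₜ = ‖ψ - Pₜ ψ‖²`. Along `y ↦ P y` the potential `‖ψ‖² - ‖y‖² + p' ‖ψ - y‖²` (failure so far plus
`p'` times the squared distance to the initial state) grows by at most `(p + p') ‖ψ - P ψ‖²`: the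
cross term `⟪ψ - y, y - P y⟫` equals `⟪ψ - P ψ, y - P y⟫ - ‖y - P y‖²`, and Young's inequality for
the conjugate pair `(p, p')` absorbs it. The first projection adds exactly `(1 + p') ε₀`, and the
last one costs only `‖y - P y‖² ≤ (‖ψ - P ψ‖ + ‖ψ - y‖)² ≤ p ε_{m-1} + p' ‖ψ - y‖²`.
-/

open scoped InnerProductSpace

namespace Real.HolderConjugate

variable {p q : ℝ}

theorem add_sq_le (hpq : p.HolderConjugate q) (a b : ℝ) :
    (a + b) ^ 2 ≤ p * a ^ 2 + q * b ^ 2 := by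
  have hp := hpq.sub_one_pos
  have key : (p - 1) * (p * a ^ 2 + q * b ^ 2 - (a + b) ^ 2) = ((p - 1) * a - b) ^ 2 := by
    linear_combination b ^ 2 * hpq.mul_eq_add
  nlinarith [sq_nonneg ((p - 1) * a - b)]

theorem sq_add_mul_two_mul_sub_sq_le (hpq : p.HolderConjugate q) (a b : ℝ) :
    b ^ 2 + q * (2 * a * b - b ^ 2) ≤ (p + q) * a ^ 2 := by
  have key : p * ((p + q) * a ^ 2 - (b ^ 2 + q * (2 * a * b - b ^ 2))) = q * (b - p * a) ^ 2 := by
    linear_combination (b ^ 2 - p * a ^ 2) * hpq.mul_eq_add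
  nlinarith [mul_nonneg hpq.symm.nonneg (sq_nonneg (b - p * a)), hpq.pos]

end Real.HolderConjugate

namespace LinearMap.IsSymmetricProjection

variable {𝕜 E : Type*} [RCLike 𝕜] [SeminormedAddCommGroup E] [InnerProductSpace 𝕜 E]
  {P : E →ₗ[𝕜] E}

theorem inner_apply_sub_apply (hP : P.IsSymmetricProjection) (x y : E) :
    ⟪P x, y - P y⟫_𝕜 = 0 := by
  rw [inner_sub_right, hP.isSymmetric x (P y), ← Module.End.mul_apply, hP.isIdempotentElem.eq,
    hP.isSymmetric, sub_self]

theorem inner_sub_apply_sub_apply (hP : P.IsSymmetricProjection) (x y : E) :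
    ⟪x - P x, y - P y⟫_𝕜 = ⟪x, y - P y⟫_𝕜 := by
  rw [inner_sub_left, hP.inner_apply_sub_apply, sub_zero]

theorem sq_norm_apply_add_sq_norm_sub_apply (hP : P.IsSymmetricProjection) (x : E) :
    ‖P x‖ ^ 2 + ‖x - P x‖ ^ 2 = ‖x‖ ^ 2 := by
  have h := norm_add_sq_eq_norm_sq_add_norm_sq_of_inner_eq_zero _ _ (hP.inner_apply_sub_apply x x)
  rw [add_sub_cancel] at h
  simp only [sq, h]

theorem norm_sub_apply_le (hP : P.IsSymmetricProjection) (x : E) : ‖x - P x‖ ≤ ‖x‖ := by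
  have := hP.sq_norm_apply_add_sq_norm_sub_apply x
  exact pow_le_pow_iff_left₀ (norm_nonneg _) (norm_nonneg _) two_ne_zero |>.mp
    (by nlinarith [sq_nonneg ‖P x‖])

end LinearMap.IsSymmetricProjection

section Potential

variable {𝕜 E : Type*} [RCLike 𝕜] [SeminormedAddCommGroup E] [InnerProductSpace 𝕜 E]
  {P : E →ₗ[𝕜] E} {p p' : ℝ}

def unionBoundPotential (p' : ℝ) (ψ y : E) : ℝ := ‖ψ‖ ^ 2 - ‖y‖ ^ 2 + p' * ‖ψ - y‖ ^ 2

@[simp]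
theorem unionBoundPotential_self (p' : ℝ) (ψ : E) : unionBoundPotential p' ψ ψ = 0 := by
  simp [unionBoundPotential]

namespace LinearMap.IsSymmetricProjection

theorem unionBoundPotential_apply_self (hP : P.IsSymmetricProjection) (p' : ℝ) (ψ : E) :
    unionBoundPotential p' ψ (P ψ) = (1 + p') * ‖ψ - P ψ‖ ^ 2 := by
  rw [unionBoundPotential, ← hP.sq_norm_apply_add_sq_norm_sub_apply ψ]
  ring

theorem sq_norm_sub_apply_le (hP : P.IsSymmetricProjection) (ψ y : E) :
    ‖ψ - P y‖ ^ 2 ≤ ‖ψ - y‖ ^ 2 + 2 * ‖ψ - P ψ‖ * ‖y - P y‖ - ‖y - P y‖ ^ 2 := by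
  have hcross : ⟪ψ - y, y - P y⟫_𝕜 = ⟪ψ - P ψ, y - P y⟫_𝕜 - ⟪y - P y, y - P y⟫_𝕜 := by
    rw [← inner_sub_left, ← hP.inner_sub_apply_sub_apply, map_sub]
    congr 1
    abel
  have hsplit : ψ - P y = (ψ - y) + (y - P y) := by abel
  rw [hsplit, norm_add_sq (𝕜 := 𝕜), hcross, map_sub, inner_self_eq_norm_sq]
  nlinarith [re_inner_le_norm (𝕜 := 𝕜) (ψ - P ψ) (y - P y)]

theorem unionBoundPotential_apply_le (hP : P.IsSymmetricProjection) (hpq : p.HolderConjugate p')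
    (ψ y : E) :
    unionBoundPotential p' ψ (P y) ≤
      unionBoundPotential p' ψ y + (p + p') * ‖ψ - P ψ‖ ^ 2 := by
  have hdist := mul_le_mul_of_nonneg_left (hP.sq_norm_sub_apply_le ψ y) hpq.symm.nonneg
  have hyoung := hpq.sq_add_mul_two_mul_sub_sq_le ‖ψ - P ψ‖ ‖y - P y‖
  have hy := hP.sq_norm_apply_add_sq_norm_sub_apply y
  simp only [unionBoundPotential]
  nlinarith

theorem sq_norm_sub_sq_norm_apply_le (hP : P.IsSymmetricProjection) (hpq : p.HolderConjugate p')
    (ψ y : E) :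
    ‖ψ‖ ^ 2 - ‖P y‖ ^ 2 ≤ unionBoundPotential p' ψ y + p * ‖ψ - P ψ‖ ^ 2 := by
  have htri : ‖y - P y‖ ≤ ‖ψ - P ψ‖ + ‖ψ - y‖ := by
    have h : y - P y = (ψ - P ψ) - ((ψ - y) - P (ψ - y)) := by rw [map_sub]; abel
    rw [h]
    exact (norm_sub_le _ _).trans (add_le_add_right (hP.norm_sub_apply_le _) _)
  have hsq : ‖y - P y‖ ^ 2 ≤ (‖ψ - P ψ‖ + ‖ψ - y‖) ^ 2 :=
    pow_le_pow_left₀ (norm_nonneg _) htri 2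
  have hyoung := hpq.add_sq_le ‖ψ - P ψ‖ ‖ψ - y‖
  have hy := hP.sq_norm_apply_add_sq_norm_sub_apply y
  simp only [unionBoundPotential]
  linarith

end LinearMap.IsSymmetricProjection

end Potential

def revPartialProd {M : Type*} [Monoid M] (f : ℕ → M) : ℕ → M
  | 0 => 1
  | n + 1 => f n * revPartialProd f n

theorem revPartialProd_eq_prod_reverse_ofFn {M : Type*} [Monoid M] (f : ℕ → M) (n : ℕ) :
    revPartialProd f n = (List.ofFn fun i : Fin n => f i).reverse.prod := by
  induction n with
  | zero => rfl
  | succ n ih =>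
    rw [revPartialProd, ih, List.ofFn_succ', List.concat_eq_append, List.reverse_append]
    simp

section SequentialProjections

variable {𝕜 E : Type*} [RCLike 𝕜] [SeminormedAddCommGroup E] [InnerProductSpace 𝕜 E]
  {P : ℕ → E →ₗ[𝕜] E} {p p' : ℝ}

theorem unionBoundPotential_revPartialProd_le (hP : ∀ k, (P k).IsSymmetricProjection)
    (hpq : p.HolderConjugate p') (ψ : E) (n : ℕ) :
    unionBoundPotential p' ψ (revPartialProd P n ψ) ≤
      (1 + p') * ‖ψ - P 0 ψ‖ ^ 2 + (p + p') * ∑ t ∈ Finset.Ico 1 n, ‖ψ - P t ψ‖ ^ 2 := by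
  induction n with
  | zero =>
    simp only [revPartialProd, Module.End.one_apply, unionBoundPotential_self,
      Finset.Ico_eq_empty_of_le zero_le_one, Finset.sum_empty, mul_zero, add_zero]
    exact mul_nonneg (by linarith [hpq.symm.nonneg]) (sq_nonneg _)
  | succ n ih =>
    rcases n with _ | n
    · simp [revPartialProd, (hP 0).unionBoundPotential_apply_self]
    · rw [Finset.sum_Ico_succ_top (by omega), mul_add, ← add_assoc]
      exact ((hP (n + 1)).unionBoundPotential_apply_le hpq ψ _).trans (by gcongr)

theorem sq_norm_sub_sq_norm_revPartialProd_le (hP : ∀ k, (P k).IsSymmetricProjection)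
    (hpq : p.HolderConjugate p') (ψ : E) (n : ℕ) :
    ‖ψ‖ ^ 2 - ‖revPartialProd P (n + 1) ψ‖ ^ 2 ≤
      (1 + p') * ‖ψ - P 0 ψ‖ ^ 2 + (p + p') * ∑ t ∈ Finset.Ico 1 n, ‖ψ - P t ψ‖ ^ 2 +
        p * ‖ψ - P n ψ‖ ^ 2 :=
  ((hP n).sq_norm_sub_sq_norm_apply_le hpq ψ _).trans
    (by gcongr; exact unionBoundPotential_revPartialProd_le hP hpq ψ n)

end SequentialProjections

section MatrixFacts

variable {𝕜 n : Type*} [RCLike 𝕜] [Fintype n]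

theorem Matrix.IsHermitian.trace_mul_mul_conjTranspose_of_mul_self {A : Matrix n n 𝕜}
    (hA : A.IsHermitian) (hAA : A * A = A) (ρ : Matrix n n 𝕜) :
    (A * ρ * Aᴴ).trace = (ρ * A).trace := by
  rw [hA.eq, trace_mul_comm, ← mul_assoc, hAA, trace_mul_comm]

variable [DecidableEq n] in
open scoped MatrixOrder in
theorem Matrix.PosSemidef.exists_eq_mul_conjTranspose {ρ : Matrix n n 𝕜} (hρ : ρ.PosSemidef) :
    ∃ R : Matrix n n 𝕜, ρ = R * Rᴴ :=
  ⟨CFC.sqrt ρ, by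
    rw [← star_eq_conjTranspose, (CFC.sqrt_nonneg ρ).isSelfAdjoint.star_eq,
      CFC.sqrt_mul_sqrt_self ρ hρ.nonneg]⟩

end MatrixFacts

section HilbertSchmidt

variable {𝕜 m n : Type*} [RCLike 𝕜]

variable (𝕜 m n) in
def hilbertSchmidtEquiv : Matrix m n 𝕜 ≃ₗ[𝕜] EuclideanSpace 𝕜 (m × n) :=
  (LinearEquiv.curry 𝕜 𝕜 m n).symm.trans (WithLp.linearEquiv 2 𝕜 _).symm

@[simp]
theorem hilbertSchmidtEquiv_apply (X : Matrix m n 𝕜) (ij : m × n) :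
    hilbertSchmidtEquiv 𝕜 m n X ij = X ij.1 ij.2 :=
  rfl

variable [Fintype m] [Fintype n]

theorem inner_hilbertSchmidtEquiv (X Y : Matrix m n 𝕜) :
    inner 𝕜 (hilbertSchmidtEquiv 𝕜 m n X) (hilbertSchmidtEquiv 𝕜 m n Y) = (Xᴴ * Y).trace := by
  simp only [hilbertSchmidtEquiv_apply, PiLp.inner_apply, Fintype.sum_prod_type, trace,
    diag, mul_apply, conjTranspose_apply]
  rw [Finset.sum_comm]
  simp [mul_comm]

theorem sq_norm_hilbertSchmidtEquiv (X : Matrix m n 𝕜) :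
    ‖hilbertSchmidtEquiv 𝕜 m n X‖ ^ 2 = RCLike.re (X * Xᴴ).trace := by
  rw [← inner_self_eq_norm_sq (𝕜 := 𝕜), inner_hilbertSchmidtEquiv, trace_mul_comm]

variable [DecidableEq n]

variable (𝕜 n) in
def hilbertSchmidtMulLeft : Matrix n n 𝕜 →ₐ[𝕜] Module.End 𝕜 (EuclideanSpace 𝕜 (n × n)) :=
  ((hilbertSchmidtEquiv 𝕜 n n).conjAlgEquiv 𝕜).toAlgHom.comp (Algebra.lmul 𝕜 (Matrix n n 𝕜))

theorem hilbertSchmidtMulLeft_apply (A X : Matrix n n 𝕜) :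
    hilbertSchmidtMulLeft 𝕜 n A (hilbertSchmidtEquiv 𝕜 n n X) =
      hilbertSchmidtEquiv 𝕜 n n (A * X) := by
  simp [hilbertSchmidtMulLeft, LinearEquiv.conjAlgEquiv_apply]

theorem isSymmetricProjection_hilbertSchmidtMulLeft {A : Matrix n n 𝕜} (hA : A.IsHermitian)
    (hAA : A * A = A) : (hilbertSchmidtMulLeft 𝕜 n A).IsSymmetricProjection where
  isIdempotentElem := by rw [IsIdempotentElem, ← map_mul, hAA]
  isSymmetric x y := by
    obtain ⟨X, rfl⟩ := (hilbertSchmidtEquiv 𝕜 n n).surjective x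
    obtain ⟨Y, rfl⟩ := (hilbertSchmidtEquiv 𝕜 n n).surjective y
    rw [hilbertSchmidtMulLeft_apply, hilbertSchmidtMulLeft_apply, inner_hilbertSchmidtEquiv,
      inner_hilbertSchmidtEquiv, conjTranspose_mul, hA.eq, mul_assoc]

theorem sq_norm_hilbertSchmidtMulLeft_apply (X R : Matrix n n 𝕜) :
    ‖hilbertSchmidtMulLeft 𝕜 n X (hilbertSchmidtEquiv 𝕜 n n R)‖ ^ 2 =
      RCLike.re (X * (R * Rᴴ) * Xᴴ).trace := by
  rw [hilbertSchmidtMulLeft_apply, sq_norm_hilbertSchmidtEquiv, conjTranspose_mul,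
    mul_assoc, mul_assoc, mul_assoc]

theorem sq_norm_sub_hilbertSchmidtMulLeft_apply {A : Matrix n n 𝕜} (hA : A.IsHermitian)
    (hAA : A * A = A) (R : Matrix n n 𝕜) :
    ‖hilbertSchmidtEquiv 𝕜 n n R - hilbertSchmidtMulLeft 𝕜 n A (hilbertSchmidtEquiv 𝕜 n n R)‖ ^ 2 =
      RCLike.re (R * Rᴴ * (1 - A)).trace := by
  have h := (isSymmetricProjection_hilbertSchmidtMulLeft hA hAA).sq_norm_apply_add_sq_norm_sub_apply
      (hilbertSchmidtEquiv 𝕜 n n R)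
  rw [sq_norm_hilbertSchmidtMulLeft_apply, hA.trace_mul_mul_conjTranspose_of_mul_self hAA,
    sq_norm_hilbertSchmidtEquiv] at h
  rw [mul_sub, mul_one, trace_sub, map_sub]
  linarith

end HilbertSchmidt


theorem Fin.sum_filter_lt_val_lt {M : Type*} [AddCommMonoid M] (f : ℕ → M) {a b m : ℕ}
    (hb : b ≤ m) :
    ∑ t ∈ Finset.univ.filter (fun t : Fin m => a < t.val ∧ t.val < b), f t =
      ∑ t ∈ Finset.Ioo a b, f t := by
  rw [Finset.sum_filter, Fin.sum_univ_eq_sum_range (fun k => if a < k ∧ k < b then f k else 0),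
    ← Finset.sum_filter]
  congr 1
  ext k
  simp only [Finset.mem_filter, Finset.mem_range, Finset.mem_Ioo]
  omega

/-- Refined union bound of Khabbazi Oskouei–Mancini–Wilde. -/
theorem refined_quantum_union_bound
    {d m : ℕ} (ρ : Matrix (Fin d) (Fin d) ℂ)
    (hρ : ρ.PosSemidef) (hρ1 : ρ.trace = 1)
    (A : Fin m → Matrix (Fin d) (Fin d) ℂ)
    (hAherm : ∀ t, (A t).IsHermitian) (hAproj : ∀ t, A t * A t = A t)
    (ε : Fin m → ℝ) (hε : ∀ t, ε t = ((ρ * (1 - A t)).trace).re)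
    (Succ Fail : ℝ)
    (hSucc : Succ = ((((List.ofFn A).reverse.prod) * ρ * ((List.ofFn A).reverse.prod)ᴴ).trace).re)
    (hFail : Fail = 1 - Succ)
    (hm2 : 2 ≤ m) (p p' : ℝ) (hp : 0 < p) (hp' : 0 < p') (hpp : 1 / p + 1 / p' = 1) :
    Fail - ε ⟨0, by omega⟩ ≤
      p' * ε ⟨0, by omega⟩ +
        (p + p') * ∑ t ∈ Finset.univ.filter (fun t : Fin m => 0 < t.val ∧ t.val < m - 1), ε t +
        p * ε ⟨m - 1, by omega⟩ := by
  obtain ⟨R, rfl⟩ := hρ.exists_eq_mul_conjTranspose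
  have hpq : p.HolderConjugate p' := Real.holderConjugate_iff.mpr
    ⟨(div_lt_one hp).mp (by linarith [one_div_pos.mpr hp']), by simpa using hpp⟩
  let A' : ℕ → Matrix (Fin d) (Fin d) ℂ := fun k => if h : k < m then A ⟨k, h⟩ else 1
  have hA' : ∀ t : Fin m, A' t = A t := fun t => dif_pos t.isLt
  let P := fun k => hilbertSchmidtMulLeft ℂ (Fin d) (A' k)
  have hP : ∀ k, (P k).IsSymmetricProjection := fun k => by
    dsimp only [P, A']
    split_ifs
    exacts [isSymmetricProjection_hilbertSchmidtMulLeft (hAherm _) (hAproj _),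
      isSymmetricProjection_hilbertSchmidtMulLeft isHermitian_one (mul_one 1)]
  set ψ := hilbertSchmidtEquiv ℂ (Fin d) (Fin d) R
  have hε' : ∀ t : Fin m, ε t = ‖ψ - P t ψ‖ ^ 2 := by
    intro t
    rw [hε, ← RCLike.re_to_complex,
      ← sq_norm_sub_hilbertSchmidtMulLeft_apply (hAherm t) (hAproj t) R, ← hA' t]
  have hSucc' : Succ = ‖revPartialProd P m ψ‖ ^ 2 := by
    rw [hSucc, ← RCLike.re_to_complex, ← sq_norm_hilbertSchmidtMulLeft_apply,
      revPartialProd_eq_prod_reverse_ofFn, map_list_prod, List.map_reverse, List.map_ofFn]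
    simp only [P, hA']
    rfl
  have key := sq_norm_sub_sq_norm_revPartialProd_le hP hpq ψ (m - 1)
  rw [Nat.sub_add_cancel (by omega)] at key
  have hψ : ‖ψ‖ ^ 2 = 1 := by
    rw [sq_norm_hilbertSchmidtEquiv, hρ1, RCLike.re_to_complex, Complex.one_re]
  rw [hFail, hSucc', hε', hε', Finset.sum_congr rfl fun t _ => hε' t,
    Fin.sum_filter_lt_val_lt (fun k => ‖ψ - P k ψ‖ ^ 2) (Nat.sub_le m 1),
    ← Finset.Ico_add_one_left_eq_Ioo, zero_add]
  linarith
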